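/- arXiv:2511.05201 — 5 statements merged into one kernel-verified Lean document; each statement's English description precedes it below -/
import Mathlib

section
/- Let K₀ ⊆ L₀ be a finite separable field extension, and let K = K₀((t)), L = L₀((t)) be the corresponding Laurent series fields. Then every element of 1 + t·K₀[[t]] (i.e., every formal power series with constant term 1, viewed in K) is the norm of an element of L under the field norm N_{L/K}. -/
/-!
The norm `N` from `L₀⟦t⟧` to `K₀⟦t⟧` is multiplicative, `t`-adically continuous, and satisfies
`N (1 + t ^ k • x) ≡ 1 + t ^ k * Tr x` modulo `t ^ (2 * k)`. As `L₀ / K₀` is separable there is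
an `e` with `Tr e = 1`, so if `N g ≡ f` modulo `t ^ k` with `k ≥ 1`, multiplying `g` by a factor
`1 + t ^ k • c • e` gives agreement modulo `t ^ (k + 1)`. These corrections converge
`t`-adically, and the limit has norm `f`. The Laurent series fields are the localizations of the
power series rings at `t`, and the norm commutes with localization.
-/

open PowerSeries LaurentSeries

theorem smodEq_span_singleton_pow_iff {R : Type*} [CommRing R] (s x y : R) (n : ℕ) :
    x ≡ y [SMOD (Ideal.span {s} ^ n • ⊤ : Ideal R)] ↔ s ^ n ∣ x - y := by
  rw [SModEq.sub_mem, smul_eq_mul, Ideal.mul_top, Ideal.span_singleton_pow,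
    Ideal.mem_span_singleton]

namespace Algebra

variable {A B : Type*} [CommRing A] [CommRing B] [Algebra A B] [Module.Free A B]
  [Module.Finite A B]

theorem dvd_norm_add_smul_sub_norm (x y : B) (c : A) :
    c ∣ norm A (x + c • y) - norm A x := by
  classical
  let b := Module.Free.chooseBasis A B
  let π := Ideal.Quotient.mk (Ideal.span {c})
  have hπc : π c = 0 := Ideal.Quotient.eq_zero_iff_mem.mpr (Ideal.mem_span_singleton_self c)
  have hπ : π.mapMatrix (leftMulMatrix b (x + c • y)) = π.mapMatrix (leftMulMatrix b x) := by
    ext i j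
    simp [hπc]
  rw [← Ideal.mem_span_singleton, ← Ideal.Quotient.eq, norm_eq_matrix_det b, norm_eq_matrix_det b,
    RingHom.map_det, RingHom.map_det, hπ]

theorem dvd_norm_sub_norm {c : A} {x y : B} (h : algebraMap A B c ∣ x - y) :
    c ∣ norm A x - norm A y := by
  obtain ⟨z, hz⟩ := h
  rw [sub_eq_iff_eq_add', ← Algebra.smul_def] at hz
  rw [hz]
  exact dvd_norm_add_smul_sub_norm y z c

theorem exists_dvd_sub_and_dvd_norm_sub {t a : A} (ha : t ∣ a - 1) {e : B}
    (he : trace A B e = 1) (k : ℕ) (g : B) (hg : t ^ (k + 1) ∣ norm A g - a) :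
    ∃ g' : B, algebraMap A B t ^ (k + 1) ∣ g' - g ∧ t ^ (k + 2) ∣ norm A g' - a := by
  obtain ⟨u, hu⟩ := ha
  obtain ⟨d, hd⟩ := hg
  obtain ⟨r, hr⟩ := norm_one_add_smul (t ^ (k + 1)) (-d • e)
  rw [map_smul, he, smul_eq_mul, mul_one] at hr
  refine ⟨g * (1 + t ^ (k + 1) • (-d • e)), ⟨g * (-d • e), ?_⟩,
    ⟨d * (-u - t ^ k * d) + norm A g * r * t ^ k, ?_⟩⟩
  · rw [Algebra.smul_def, map_pow]
    ring
  · rw [map_mul, hr]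
    linear_combination (1 - d * t ^ (k + 1)) * hd - t ^ (k + 1) * d * hu

theorem exists_norm_eq_of_isPrecomplete (t : A)
    [IsPrecomplete (Ideal.span {algebraMap A B t}) B] [IsHausdorff (Ideal.span {t}) A]
    {e : B} (he : trace A B e = 1) {a : A} (ha : t ∣ a - 1) : ∃ g : B, norm A g = a := by
  choose! next h_next h_norm_next using exists_dvd_sub_and_dvd_norm_sub ha he
  let G : ℕ → B := fun n => Nat.rec 1 next n
  have hG : ∀ n, t ^ (n + 1) ∣ norm A (G n) - a := by
    intro n
    induction n with
    | zero =>
      rw [← dvd_neg, neg_sub]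
      simpa [G] using ha
    | succ n ih => exact h_norm_next n (G n) ih
  have hG_cauchy : ∀ {m n}, m ≤ n → algebraMap A B t ^ m ∣ G n - G m := by
    intro m n hmn
    induction n, hmn using Nat.le_induction with
    | base => simp
    | succ n hmn ih =>
      rw [← sub_add_sub_cancel]
      exact dvd_add ((pow_dvd_pow _ (by omega)).trans (h_next n (G n) (hG n))) ih
  obtain ⟨g, hg⟩ := IsPrecomplete.prec ‹_› (f := G) fun hmn => by
    rw [smodEq_span_singleton_pow_iff, ← neg_sub, dvd_neg]
    exact hG_cauchy hmn
  refine ⟨g, sub_eq_zero.mp (IsHausdorff.haus ‹_› _ fun n => ?_)⟩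
  rw [smodEq_span_singleton_pow_iff, sub_zero, ← sub_add_sub_cancel _ (norm A (G n))]
  refine dvd_add (dvd_norm_sub_norm ?_) ((pow_dvd_pow _ n.le_succ).trans (hG n))
  rw [map_pow, ← neg_sub, dvd_neg, ← smodEq_span_singleton_pow_iff]
  exact hg n

end Algebra

theorem PowerSeries.coeff_smul_C {R S : Type*} [CommRing R] [CommRing S] [Algebra R S]
    (a : R⟦X⟧) (s : S) (n : ℕ) : coeff n (a • C s) = coeff n a • s := by
  rw [Algebra.smul_def, algebraMap_apply'', coeff_mul_C, coeff_map, Algebra.smul_def]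

namespace Module.Basis

variable {ι R S : Type*} [CommRing R] [CommRing S] [Algebra R S]

theorem repr_coeff_smul (b : Basis ι R S) (a : R⟦X⟧) (g : S⟦X⟧) (i : ι) (n : ℕ) :
    b.repr (coeff n (a • g)) i = coeff n (a * PowerSeries.mk fun m => b.repr (coeff m g) i) := by
  rw [Algebra.smul_def, algebraMap_apply'', coeff_mul, coeff_mul, map_sum,
    Finsupp.finsetSum_apply]
  refine Finset.sum_congr rfl fun p _ => ?_
  rw [coeff_map, ← Algebra.smul_def, map_smul, coeff_mk]
  rfl

variable [Fintype ι]

noncomputable def powerSeries (b : Basis ι R S) : Basis ι R⟦X⟧ S⟦X⟧ :=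
  .ofEquivFun
    { toFun g i := PowerSeries.mk fun n => b.repr (coeff n g) i
      invFun c := ∑ i, c i • C (b i)
      map_add' g h := by ext; simp
      map_smul' a g := by ext i n; simpa using repr_coeff_smul b a g i n
      left_inv g := by
        ext n
        simp [coeff_smul_C, b.sum_repr]
      right_inv c := by
        classical
        ext i n
        simp [coeff_smul_C, Finsupp.single_apply] }

theorem powerSeries_repr_apply (b : Basis ι R S) (g : S⟦X⟧) (i : ι) :
    b.powerSeries.repr g i = PowerSeries.mk fun n => b.repr (coeff n g) i :=
  rfl

theorem powerSeries_apply (b : Basis ι R S) (i : ι) : b.powerSeries i = C (b i) := by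
  classical
  simp [powerSeries, Basis.coe_ofEquivFun]

end Module.Basis

namespace PowerSeries

variable {R S : Type*} [CommRing R] [CommRing S] [Algebra R S] [Module.Free R S]
  [Module.Finite R S]

instance : Module.Free R⟦X⟧ S⟦X⟧ := .of_basis (Module.Free.chooseBasis R S).powerSeries

instance : Module.Finite R⟦X⟧ S⟦X⟧ := .of_basis (Module.Free.chooseBasis R S).powerSeries

theorem trace_C (s : S) : Algebra.trace R⟦X⟧ S⟦X⟧ (C s) = C (Algebra.trace R S s) := by
  classical
  let b := Module.Free.chooseBasis R S
  rw [Algebra.trace_eq_matrix_trace b.powerSeries, Algebra.trace_eq_matrix_trace b, Matrix.trace,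
    Matrix.trace, map_sum]
  refine Finset.sum_congr rfl fun i _ => ?_
  ext n
  rcases eq_or_ne n 0 with rfl | hn <;>
    simp [Algebra.leftMulMatrix_eq_repr_mul, Module.Basis.powerSeries_repr_apply,
      Module.Basis.powerSeries_apply, ← map_mul, coeff_C, *]

theorem exists_norm_eq {e : S} (he : Algebra.trace R S e = 1) {f : R⟦X⟧}
    (hf : constantCoeff f = 1) : ∃ g : S⟦X⟧, Algebra.norm R⟦X⟧ g = f := by
  have : IsPrecomplete (Ideal.span {algebraMap R⟦X⟧ S⟦X⟧ X}) S⟦X⟧ := by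
    rw [algebraMap_apply'', map_X]
    infer_instance
  refine Algebra.exists_norm_eq_of_isPrecomplete X (e := C e) ?_ ?_
  · rw [trace_C, he, map_one]
  · rw [X_dvd_iff, map_sub, hf, map_one, sub_self]

end PowerSeries

theorem LaurentSeries.norm_coe_powerSeries {R S : Type*} [CommRing R] [CommRing S] [Algebra R S]
    [Module.Free R S] [Module.Finite R S] (σ : R⸨X⸩ →+* S⸨X⸩)
    (hσ : ∀ f : R⟦X⟧, σ f = (PowerSeries.map (algebraMap R S) f : S⸨X⸩)) (g : S⟦X⟧) :
    let _ : Algebra R⸨X⸩ S⸨X⸩ := σ.toAlgebra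
    Algebra.norm R⸨X⸩ (g : S⸨X⸩) = (Algebra.norm R⟦X⟧ g : R⸨X⸩) := by
  intro _
  let : Algebra R⟦X⟧ S⸨X⸩ := (σ.comp (algebraMap R⟦X⟧ R⸨X⸩)).toAlgebra
  have : IsScalarTower R⟦X⟧ R⸨X⸩ S⸨X⸩ := .of_algebraMap_eq' rfl
  have : IsScalarTower R⟦X⟧ S⟦X⟧ S⸨X⸩ := .of_algebraMap_eq hσ
  have : IsLocalization (Algebra.algebraMapSubmonoid S⟦X⟧ (.powers (X : R⟦X⟧))) S⸨X⸩ := by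
    rw [Algebra.algebraMapSubmonoid, Submonoid.map_powers, algebraMap_apply'', map_X]
    infer_instance
  exact Algebra.norm_localization R⟦X⟧ (.powers X) g

/-- Let `K₀ ⊆ L₀` be a finite separable field extension, and let
`K = K₀((t))`, `L = L₀((t))` be the corresponding Laurent series fields, with `L` regarded
as a `K`-algebra via the coefficientwise embedding `σ` (i.e. `σ` restricts on power series
to `PowerSeries.map (algebraMap K₀ L₀)`).  Then every element of `1 + t·K₀[[t]]`, i.e. every
power series with constant coefficient `1` viewed in `K`, is the norm `N_{L/K}` of an
element of `L`. -/
theorem one_add_t_mul_powerSeries_is_norm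
    (K₀ L₀ : Type*) [Field K₀] [Field L₀] [Algebra K₀ L₀]
    [FiniteDimensional K₀ L₀] [Algebra.IsSeparable K₀ L₀]
    (σ : LaurentSeries K₀ →+* LaurentSeries L₀)
    (hσ : ∀ f : PowerSeries K₀,
      σ (f : LaurentSeries K₀) = ((PowerSeries.map (algebraMap K₀ L₀) f : PowerSeries L₀) :
        LaurentSeries L₀)) :
    letI : Algebra (LaurentSeries K₀) (LaurentSeries L₀) := σ.toAlgebra
    ∀ f : PowerSeries K₀, PowerSeries.constantCoeff f = 1 →
      ∃ g : LaurentSeries L₀,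
        Algebra.norm (LaurentSeries K₀) g = (f : LaurentSeries K₀) := by
  intro f hf
  obtain ⟨e, he⟩ := Algebra.trace_surjective K₀ L₀ 1
  obtain ⟨g, hg⟩ := PowerSeries.exists_norm_eq he hf
  exact ⟨g, by rw [LaurentSeries.norm_coe_powerSeries σ hσ, hg]⟩
end

section
/- Let K be a field of characteristic p > 0 with [K : K^p] = p, and let L/K be a finite purely inseparable extension. Then the field norm N_{L/K} : Lˣ → Kˣ is surjective. -/
/-!
If `L/K` is purely inseparable of degree `pⁿ`, then `y ↦ yᵖⁿ` maps `L` into `K`, and it carries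
`K` onto `Kᵖⁿ`; so its image `Lᵖⁿ` sits in the tower `Kᵖⁿ ⊆ Lᵖⁿ ⊆ K` with `[Lᵖⁿ : Kᵖⁿ] = [L : K] = pⁿ`.
The hypothesis `[K : Kᵖ] = p` gives `[K : Kᵖⁿ] = pⁿ`, hence `Lᵖⁿ = K`: every `x ∈ K` is `yᵖⁿ` for
some `y ∈ L`, and then `N(y)ᵖⁿ = N(x) = xᵖⁿ` forces `N(y) = x`.
-/

open Module

theorem finrank_fieldRange_iterateFrobenius (K : Type*) [Field K] (p : ℕ) [ExpChar K p] (n : ℕ) :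
    finrank (iterateFrobenius K p n).fieldRange K = finrank (frobenius K p).fieldRange K ^ n := by
  induction n with
  | zero =>
    rw [iterateFrobenius_zero, pow_zero, ← Subfield.relfinrank_top_right]
    exact Subfield.relfinrank_eq_one_of_le fun x _ ↦ ⟨x, rfl⟩
  | succ n ih =>
    have hmap : (iterateFrobenius K p (n + 1)).fieldRange =
        (frobenius K p).fieldRange.map (iterateFrobenius K p n) := by
      rw [RingHom.map_fieldRange, iterateFrobenius_add, iterateFrobenius_one]
    have hle : (iterateFrobenius K p (n + 1)).fieldRange ≤ (iterateFrobenius K p n).fieldRange := by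
      rw [iterateFrobenius_add]
      rintro _ ⟨x, rfl⟩
      exact ⟨_, rfl⟩
    rw [← Subfield.relfinrank_top_right, ← Subfield.relfinrank_mul_relfinrank hle le_top,
      Subfield.relfinrank_top_right, ih, hmap, RingHom.fieldRange_eq_map (iterateFrobenius K p n),
      Subfield.relfinrank_map_map, Subfield.relfinrank_top_right, pow_succ']

theorem Algebra.norm_eq_of_pow_eq {K L : Type*} [Field K] [Field L] [Algebra K L]
    {p n : ℕ} [ExpChar K p] (hn : finrank K L = p ^ n) {x : K} {y : L}
    (hy : y ^ p ^ n = algebraMap K L x) : Algebra.norm K y = x := by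
  apply iterateFrobenius_inj K p n
  rw [iterateFrobenius_def, iterateFrobenius_def, ← map_pow, hy, Algebra.norm_algebraMap, hn]

namespace IsPurelyInseparable

variable (K : Type*) {L : Type*} [Field K] [Field L] [Algebra K L]

theorem pow_finrank_mem_range [IsPurelyInseparable K L] [FiniteDimensional K L] (a : L) :
    a ^ finrank K L ∈ (algebraMap K L).range := by
  obtain ⟨k, hk⟩ := minpoly.degree_dvd (isIntegral' K a)
  rw [hk, minpoly_natDegree_eq, pow_mul]
  exact Subring.pow_mem _ (elemExponent_def K a) k

theorem exponent_le_of_finrank_eq_pow [IsPurelyInseparable K L] [FiniteDimensional K L]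
    (p : ℕ) [ExpChar K p] {n : ℕ} (hn : finrank K L = p ^ n) : exponent K L ≤ n := by
  by_contra h
  obtain ⟨a, ha⟩ := exponent_min' p (not_le.1 h)
  exact ha (hn ▸ pow_finrank_mem_range K a)

variable [HasExponent K L] (p : ℕ) [ExpChar K p] {n : ℕ}

theorem finrank_mul_finrank_fieldRange_iterateFrobenius (hn : exponent K L ≤ n) :
    finrank K L * finrank (iterateFrobenius K L p hn).fieldRange K =
      finrank (_root_.iterateFrobenius K p n).fieldRange K := by
  set φ := iterateFrobenius K L p hn
  have hcomp : φ.comp (algebraMap K L) = _root_.iterateFrobenius K p n :=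
    RingHom.ext (iterateFrobenius_algebraMap L p hn)
  have hle : (_root_.iterateFrobenius K p n).fieldRange ≤ φ.fieldRange := by
    rw [← hcomp]
    rintro _ ⟨x, rfl⟩
    exact ⟨_, rfl⟩
  have hK : Subfield.relfinrank (algebraMap K L).fieldRange ⊤ = finrank K L := by
    rw [← IntermediateField.bot_toSubfield, ← IntermediateField.top_toSubfield (F := K)]
    exact (IntermediateField.relfinrank_bot_left ⊤).trans IntermediateField.finrank_top'
  rw [← Subfield.relfinrank_top_right, ← Subfield.relfinrank_top_right,
    ← Subfield.relfinrank_mul_relfinrank hle le_top, ← hcomp, ← RingHom.map_fieldRange,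
    RingHom.fieldRange_eq_map φ, Subfield.relfinrank_map_map, hK]

theorem iterateFrobenius_surjective [FiniteDimensional K L] (hn : exponent K L ≤ n)
    (h : finrank (_root_.iterateFrobenius K p n).fieldRange K = finrank K L) :
    Function.Surjective (iterateFrobenius K L p hn) := by
  have hrange := finrank_mul_finrank_fieldRange_iterateFrobenius K p hn
  rw [h, Nat.mul_eq_left finrank_pos.ne', ← Subfield.relfinrank_top_right,
    Subfield.relfinrank_eq_one_iff] at hrange
  exact fun x ↦ hrange trivial

end IsPurelyInseparable

/-- Let `K` be a field of characteristic `p > 0` with `[K : Kᵖ] = p`, and let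
`L/K` be a finite purely inseparable extension. Then the field norm `N_{L/K} : Lˣ → Kˣ` is
surjective. Here `Kᵖ` is the range of the Frobenius endomorphism, and `[K : Kᵖ]` is the degree
of `K` over this subfield. -/
theorem norm_surjective_of_purelyInseparable
    (p : ℕ) [Fact p.Prime]
    (K L : Type*) [Field K] [Field L] [CharP K p] [Algebra K L]
    [FiniteDimensional K L] [IsPurelyInseparable K L]
    (hdeg : Module.finrank (frobenius K p).fieldRange K = p) :
    ∀ x : Kˣ, ∃ y : Lˣ, Algebra.norm K (y : L) = (x : K) := by
  intro x
  obtain ⟨n, hn⟩ := IsPurelyInseparable.finrank_eq_pow K L p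
  have he := IsPurelyInseparable.exponent_le_of_finrank_eq_pow K p hn
  obtain ⟨y, hy⟩ := IsPurelyInseparable.iterateFrobenius_surjective K p he
    (by rw [finrank_fieldRange_iterateFrobenius, hdeg, hn]) x
  have hpow : y ^ p ^ n = algebraMap K L x := by
    rw [← IsPurelyInseparable.algebraMap_iterateFrobenius K p he, hy]
  have hy0 : y ≠ 0 := by
    rintro rfl
    exact x.ne_zero (by rw [← hy, map_zero])
  exact ⟨Units.mk0 y hy0, Algebra.norm_eq_of_pow_eq hn hpow⟩
end

section
/- Let F ∈ k[X₀,…,X_n] be a homogeneous polynomial of degree d over the field l = k(ω₁,…,ω_{m-1}) where 1, ω₁, …, ω_{m-1} is a k-basis of l of degree m = [l:k]. Substituting X_i = Σ_j T_{i,j} ω_j and expanding, one obtains homogeneous polynomials F₀,…,F_{m-1} ∈ k[T_{0,0},…,T_{n,m-1}] of degree d such that F(Σ T_{0,j}ω_j, …, Σ T_{n,j}ω_j) = Σ_{j=0}^{m-1} F_j ω_j, and for every field extension k'/k, the system F₀ = ⋯ = F_{m-1} = 0 has a nontrivial k'-solution if and only if F = 0 has a nontrivial (l ⊗_k k')-solution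 when l ⊗_k k' is a field. -/
/-!
Substituting `X_i = ∑_j ω_j T_{i,j}` into `F` gives a form of degree `d` over `l` in the variables
`T`, and the `F_j` are its coefficientwise coordinates in the basis `ω`. For any `k`-algebra `A`
and `x : A^{(n+1)m}`, evaluating `F` at `y_i = ∑_j ω_j ⊗ x_{i,j} ∈ l ⊗_k A` gives
`∑_j ω_j ⊗ F_j(x)`. Since `r ↦ ∑_j ω_j ⊗ r_j` is a linear isomorphism `A^m ≃ l ⊗_k A`, the map
`x ↦ y` is a bijection preserving nonvanishing, and `F(y) = 0` iff all `F_j(x) = 0`. Taking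
`A = k` and `l ⊗_k k ≃ l` gives the expansion identity.
-/

open scoped TensorProduct

namespace Module.Basis

variable {k l ι : Type*} [CommSemiring k] [CommSemiring l] [Algebra k l] [Fintype ι]
  (ω : Module.Basis ι k l) (A : Type*) [AddCommMonoid A] [Module k A]

noncomputable def piEquivTensor : (ι → A) ≃ₗ[k] l ⊗[k] A :=
  have := Classical.decEq ι
  (Finsupp.linearEquivFunOnFinite k A ι).symm ≪≫ₗ (TensorProduct.equivFinsuppOfBasisLeft ω).symm

lemma piEquivTensor_apply (r : ι → A) : ω.piEquivTensor A r = ∑ j, ω j ⊗ₜ[k] r j := by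
  simp [piEquivTensor, Finsupp.sum_fintype]

end Module.Basis

namespace MvPolynomial

variable {k l σ ι : Type*} [CommSemiring k] [CommSemiring l] [Algebra k l]

noncomputable def basisCoord (ω : Module.Basis ι k l) (j : ι) (H : MvPolynomial σ l) :
    MvPolynomial σ k :=
  .ofCoeff <| Finsupp.mapRange (fun c => ω.repr c j) (by simp) <| AddMonoidAlgebra.coeff H

variable (ω : Module.Basis ι k l)

@[simp]
lemma coeff_basisCoord (j : ι) (H : MvPolynomial σ l) (s : σ →₀ ℕ) :
    coeff s (basisCoord ω j H) = ω.repr (coeff s H) j :=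
  Finsupp.mapRange_apply (hf := by simp)

lemma basisCoord_add (j : ι) (H₁ H₂ : MvPolynomial σ l) :
    basisCoord ω j (H₁ + H₂) = basisCoord ω j H₁ + basisCoord ω j H₂ := by
  ext s
  simp

lemma basisCoord_monomial (j : ι) (s : σ →₀ ℕ) (c : l) :
    basisCoord ω j (monomial s c) = monomial s (ω.repr c j) := by
  classical
  ext s'
  simp only [coeff_basisCoord, coeff_monomial]
  split_ifs <;> simp

lemma IsHomogeneous.basisCoord {H : MvPolynomial σ l} {d : ℕ} (hH : H.IsHomogeneous d) (j : ι) :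
    (basisCoord ω j H).IsHomogeneous d := fun s hs =>
  hH fun h => hs (by simp [h])

variable [Fintype ι]

lemma aeval_one_tmul_eq_sum_basisCoord {A : Type*} [CommSemiring A] [Algebra k A] (x : σ → A)
    (H : MvPolynomial σ l) :
    aeval (fun p => (1 : l) ⊗ₜ[k] x p) H = ∑ j, ω j ⊗ₜ[k] aeval x (basisCoord ω j H) := by
  induction H using MvPolynomial.induction_on' with
  | add H₁ H₂ h₁ h₂ =>
    simp only [map_add, h₁, h₂, basisCoord_add, TensorProduct.tmul_add, Finset.sum_add_distrib]
  | monomial s c =>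
    have hprod : (s.prod fun p e => ((1 : l) ⊗ₜ[k] x p) ^ e)
        = (1 : l) ⊗ₜ[k] s.prod fun p e => x p ^ e := by
      simp only [← Algebra.TensorProduct.includeRight_apply, ← map_pow]
      exact (map_finsuppProd _ _ _).symm
    simp only [aeval_monomial, basisCoord_monomial, hprod, Algebra.TensorProduct.algebraMap_apply,
      Algebra.TensorProduct.tmul_mul_tmul, mul_one, one_mul, ← Algebra.smul_def,
      ← TensorProduct.smul_tmul, ← TensorProduct.sum_tmul, ω.sum_repr,
      Algebra.algebraMap_self, RingHom.id_apply]

noncomputable def weilRestriction (F : MvPolynomial σ l) (j : ι) : MvPolynomial (σ × ι) k :=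
  basisCoord ω j (aeval (fun i => ∑ t, ω t • X (i, t)) F)

lemma IsHomogeneous.weilRestriction {F : MvPolynomial σ l} {d : ℕ} (hF : F.IsHomogeneous d)
    (j : ι) : (weilRestriction ω F j).IsHomogeneous d := by
  have hlin : ∀ i, (∑ t, ω t • X (i, t) : MvPolynomial (σ × ι) l).IsHomogeneous 1 := fun i =>
    IsHomogeneous.sum _ _ _ fun t _ => by
      simpa only [smul_eq_C_mul] using (isHomogeneous_X l (i, t)).C_mul (ω t)
  have := (hF.aeval _ hlin).basisCoord ω j
  rwa [one_mul] at this

lemma aeval_sum_tmul_eq_sum_weilRestriction {A : Type*} [CommSemiring A] [Algebra k A]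
    (x : σ × ι → A) (F : MvPolynomial σ l) :
    aeval (fun i => ∑ j, ω j ⊗ₜ[k] x (i, j)) F
      = ∑ j, ω j ⊗ₜ[k] aeval x (weilRestriction ω F j) := by
  simp only [weilRestriction, ← aeval_one_tmul_eq_sum_basisCoord, comp_aeval_apply, map_sum,
    map_smul, aeval_X, TensorProduct.smul_tmul', smul_eq_mul, mul_one]

lemma eval_sum_smul_eq_sum_weilRestriction (T : σ × ι → k) (F : MvPolynomial σ l) :
    eval (fun i => ∑ j, T (i, j) • ω j) F = ∑ j, eval T (weilRestriction ω F j) • ω j := by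
  have h := congrArg (Algebra.TensorProduct.rid k l l).toAlgHom
    (aeval_sum_tmul_eq_sum_weilRestriction ω T F)
  rw [comp_aeval_apply] at h
  simpa only [AlgEquiv.coe_toAlgHom, map_sum, Algebra.TensorProduct.rid_tmul,
    aeval_eq_eval] using h

lemma exists_ne_zero_weilRestriction_eq_zero_iff (A : Type*) [CommSemiring A] [Algebra k A]
    (F : MvPolynomial σ l) :
    (∃ x : σ × ι → A, x ≠ 0 ∧ ∀ j, aeval x (weilRestriction ω F j) = 0) ↔
      ∃ y : σ → l ⊗[k] A, y ≠ 0 ∧ aeval y F = 0 := by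
  let e := LinearEquiv.curry k A σ ι ≪≫ₗ LinearEquiv.piCongrRight fun _ => ω.piEquivTensor A
  refine e.toEquiv.exists_congr fun x => ?_
  have he : e x = fun i => ∑ j, ω j ⊗ₜ[k] x (i, j) := by
    funext i
    exact ω.piEquivTensor_apply A _
  rw [LinearEquiv.coe_toEquiv, he, aeval_sum_tmul_eq_sum_weilRestriction,
    ← ω.piEquivTensor_apply A, LinearEquiv.map_eq_zero_iff, ← he, e.map_ne_zero_iff]
  exact and_congr_right' _root_.funext_iff.symm

end MvPolynomial

theorem weil_restriction_of_form_general
    (k l : Type) [Field k] [Field l] [Algebra k l]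
    (m : ℕ)
    (ω : Module.Basis (Fin m) k l)
    (n d : ℕ) (F : MvPolynomial (Fin (n + 1)) l) (hF : F.IsHomogeneous d) :
    ∃ Fj : Fin m → MvPolynomial (Fin (n + 1) × Fin m) k,
      (∀ j, (Fj j).IsHomogeneous d) ∧
      (∀ T : Fin (n + 1) × Fin m → k,
        MvPolynomial.eval (fun i => ∑ j : Fin m, T (i, j) • ω j) F
          = ∑ j : Fin m, MvPolynomial.eval T (Fj j) • ω j) ∧
      (∀ (k' : Type) [Field k'] [Algebra k k'], IsField (l ⊗[k] k') →
        ((∃ x : Fin (n + 1) × Fin m → k', x ≠ 0 ∧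
            ∀ j, MvPolynomial.eval₂ (algebraMap k k') x (Fj j) = 0) ↔
          (∃ y : Fin (n + 1) → l ⊗[k] k', y ≠ 0 ∧
            MvPolynomial.eval₂ (algebraMap l (l ⊗[k] k')) y F = 0))) :=
  ⟨MvPolynomial.weilRestriction ω F, hF.weilRestriction ω,
    fun T => MvPolynomial.eval_sum_smul_eq_sum_weilRestriction ω T F,
    fun k' _ _ _ => MvPolynomial.exists_ne_zero_weilRestriction_eq_zero_iff ω k' F⟩

/-- Let `F ∈ l[X₀,…,X_n]` be homogeneous of degree `d` over a finite
extension `l/k` of degree `m` with `k`-basis `1 = ω₀, ω₁, …, ω_{m-1}`.  Substituting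
`X_i = Σ_j T_{i,j}·ω_j` and expanding along the basis yields homogeneous polynomials
`F₀, …, F_{m-1} ∈ k[T_{i,j}]` of degree `d` with
`F(Σ_j T_{0,j}ω_j, …) = Σ_j F_j(T)·ω_j`, and for every field extension `k'/k` such that
`l ⊗_k k'` is a field, the system `F₀ = ⋯ = F_{m-1} = 0` has a nontrivial `k'`-solution iff
`F = 0` has a nontrivial `(l ⊗_k k')`-solution. -/
theorem weil_restriction_of_form
    (k l : Type) [Field k] [Field l] [Algebra k l]
    (m : ℕ) (hm : 0 < m) (hml : Module.finrank k l = m)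
    (ω : Module.Basis (Fin m) k l) (hω : ω ⟨0, hm⟩ = 1)
    (n d : ℕ) (F : MvPolynomial (Fin (n + 1)) l) (hF : F.IsHomogeneous d) :
    ∃ Fj : Fin m → MvPolynomial (Fin (n + 1) × Fin m) k,
      (∀ j, (Fj j).IsHomogeneous d) ∧
      (∀ T : Fin (n + 1) × Fin m → k,
        MvPolynomial.eval (fun i => ∑ j : Fin m, T (i, j) • ω j) F
          = ∑ j : Fin m, MvPolynomial.eval T (Fj j) • ω j) ∧
      (∀ (k' : Type) [Field k'] [Algebra k k'], IsField (l ⊗[k] k') →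
        ((∃ x : Fin (n + 1) × Fin m → k', x ≠ 0 ∧
            ∀ j, MvPolynomial.eval₂ (algebraMap k k') x (Fj j) = 0) ↔
          (∃ y : Fin (n + 1) → l ⊗[k] k', y ≠ 0 ∧
            MvPolynomial.eval₂ (algebraMap l (l ⊗[k] k')) y F = 0))) :=
  weil_restriction_of_form_general k l m ω n d F hF
end

section
/- Let k be a field of characteristic p such that [k : k^p] ≤ p^δ, and let x ∈ k \ k^p. Let K = ⋃_{m≥1} k^s(x^{1/p^m}), where k^s is a separable closure of k. Then [K : K^p] ≤ p^{δ-1}. -/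
/-!
Since `x` has a `p`-th root in `K`, the field `Kᵖ` contains `kᵖ(x)`. Moreover `K = k(Kᵖ)`: a
separable `w` lies in `k(wᵖ)`, and `x^{1/pᵐ} = (x^{1/p^{m+1}})ᵖ`. Because `k` is algebraic over
`kᵖ(x)`, this compositum is spanned over `Kᵖ` by a `kᵖ(x)`-basis of `k`, so
`[K : Kᵖ] ≤ [k : kᵖ(x)] = [k : kᵖ] / p ≤ p^{δ-1}`.
-/

open IntermediateField Polynomial

universe u

theorem rank_le_of_adjoin_eq_top {F : Type*} {k M : Type u} [Field F] [Field k] [Field M]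
    [Algebra F k] [Algebra.IsAlgebraic F k] [Algebra k M] (E : Subfield M)
    (hFE : ∀ c : F, algebraMap k M (algebraMap F k c) ∈ E)
    (htop : adjoin k (E : Set M) = ⊤) :
    Module.rank E M ≤ Module.rank F k := by
  let : Algebra F M := ((algebraMap k M).comp (algebraMap F k)).toAlgebra
  have : IsScalarTower F k M := IsScalarTower.of_algebraMap_eq' rfl
  let E' : IntermediateField F M := { E with algebraMap_mem' := hFE }
  let i := IsScalarTower.toAlgHom F k M
  let e := AlgEquiv.ofInjectiveField i
  have : Algebra.IsAlgebraic F i.fieldRange := e.isAlgebraic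
  have hadj : adjoin E' (i.fieldRange : Set M) = ⊤ := by
    rw [← toSubfield_inj, adjoin_toSubfield, top_toSubfield] at htop ⊢
    rw [← htop, Set.union_comm]
    congr 2
    exact Subtype.range_coe
  calc Module.rank E M = Module.rank E' (adjoin E' (i.fieldRange : Set M)) := by
        rw [hadj]; exact (rank_top E' M).symm
    _ ≤ Module.rank F i.fieldRange := adjoin_rank_le_of_isAlgebraic_right E' i.fieldRange
    _ = Module.rank F k := e.symm.toLinearEquiv.rank_eq

theorem finrank_adjoin_simple_eq_of_pow_mem {F E : Type*} [Field F] [Field E] [Algebra F E]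
    {p : ℕ} [hp : Fact p.Prime] [CharP E p] {x : E} {c : F} (hc : algebraMap F E c = x ^ p)
    (hx : x ∉ Set.range (algebraMap F E)) : Module.finrank F F⟮x⟯ = p := by
  have hroot : aeval x (X ^ p - C c) = 0 := by simp [hc]
  have hmonic : (X ^ p - C c).Monic := monic_X_pow_sub_C c hp.out.ne_zero
  have hirr : Irreducible (X ^ p - C c) := by
    refine X_pow_sub_C_irreducible_of_prime hp.out fun d hd => hx ⟨d, ?_⟩
    refine frobenius_inj E p ?_
    simp only [frobenius_def, ← map_pow, hd, hc]
  rw [adjoin.finrank ⟨_, hmonic, hroot⟩, ← minpoly.eq_of_irreducible_of_monic hirr hroot hmonic,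
    natDegree_X_pow_sub_C]

theorem rank_adjoin_simple_le_pow_pred {F E : Type*} [Field F] [Field E] [Algebra F E]
    [FiniteDimensional F E] {p : ℕ} [hp : Fact p.Prime] [CharP E p] {x : E} {c : F}
    (hc : algebraMap F E c = x ^ p) (hx : x ∉ Set.range (algebraMap F E)) {δ : ℕ}
    (h : Module.rank F E ≤ p ^ δ) :
    Module.rank F⟮x⟯ E ≤ p ^ (δ - 1) := by
  rw [← Module.finrank_eq_rank] at h ⊢
  norm_cast at h ⊢
  have htower := Module.finrank_mul_finrank F F⟮x⟯ E
  rw [finrank_adjoin_simple_eq_of_pow_mem hc hx] at htower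
  cases δ with
  | zero => simp only [pow_zero, zero_tsub] at h ⊢; nlinarith [hp.out.two_le]
  | succ d => exact Nat.le_of_mul_le_mul_left (htower ▸ h.trans (pow_succ' p d).le) hp.out.pos

theorem exists_pow_pow_succ_eq {Ω : Type*} [CommSemiring Ω] (p : ℕ) [ExpChar Ω p]
    [PerfectRing Ω p] {a y : Ω} {m : ℕ} (h : y ^ p ^ m = a) :
    ∃ z : Ω, z ^ p ^ (m + 1) = a ∧ z ^ p = y := by
  refine ⟨(frobeniusEquiv Ω p).symm y, ?_, frobeniusEquiv_symm_pow_p Ω p y⟩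
  rw [pow_succ', pow_mul, frobeniusEquiv_symm_pow_p, h]

theorem separableClosure_le_adjoin_image_pow {k Ω : Type*} [Field k] [Field Ω] [Algebra k Ω]
    (q : ℕ) [ExpChar k q] {K : IntermediateField k Ω} (hK : separableClosure k Ω ≤ K) :
    separableClosure k Ω ≤ adjoin k ((· ^ q) '' K) := by
  intro w hw
  have hw' : w ∈ k⟮w ^ q⟯ := adjoin_simple_eq_adjoin_pow_expChar_of_isSeparable k Ω
    (mem_separableClosure_iff.1 hw) q ▸ mem_adjoin_simple_self k w
  exact adjoin_simple_le_iff.2 (subset_adjoin _ _ (Set.mem_image_of_mem _ (hK hw))) hw'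

theorem adjoin_frobenius_fieldRange_eq_top {k Ω : Type*} [Field k] [Field Ω] [Algebra k Ω]
    (p : ℕ) {K : IntermediateField k Ω} [ExpChar K p] (hK : K ≤ adjoin k ((· ^ p) '' K)) :
    adjoin k ((frobenius K p).fieldRange : Set K) = ⊤ := by
  apply lift_injective
  rw [lift_top]
  refine le_antisymm (lift_le _) (hK.trans ?_)
  rw [lift_adjoin, adjoin_le_iff]
  rintro _ ⟨w, hw, rfl⟩
  exact subset_adjoin _ _ ⟨⟨w, hw⟩ ^ p, ⟨⟨w, hw⟩, rfl⟩, rfl⟩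

theorem algebraMap_mem_frobenius_fieldRange_of_mem_adjoin {k M : Type*} [Field k] [Field M]
    [Algebra k M] (p : ℕ) [ExpChar k p] [ExpChar M p] {x : k}
    (hx : algebraMap k M x ∈ (frobenius M p).fieldRange) (c : (frobenius k p).fieldRange⟮x⟯) :
    algebraMap k M c ∈ (frobenius M p).fieldRange := by
  have hle : ((frobenius k p).fieldRange⟮x⟯).toSubfield ≤
      (frobenius M p).fieldRange.comap (algebraMap k M) := by
    rw [adjoin_toSubfield, Subfield.closure_le]
    rintro _ (⟨⟨_, a, rfl⟩, rfl⟩ | rfl)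
    · exact ⟨algebraMap k M a, (map_pow _ a p).symm⟩
    · exact hx
  exact hle c.2

theorem pDegree_of_union_separableClosure_adjoin_roots_general
    (p : ℕ) [Fact p.Prime] (δ : ℕ)
    (k : Type*) [Field k] [CharP k p]
    (hk : Module.rank (frobenius k p).fieldRange k ≤ (p : Cardinal) ^ δ)
    (x : k) (hx : x ∉ (frobenius k p).fieldRange)
    (K : IntermediateField k (AlgebraicClosure k))
    (hK : K = separableClosure k (AlgebraicClosure k) ⊔
      IntermediateField.adjoin k
        {y : AlgebraicClosure k | ∃ m : ℕ, 1 ≤ m ∧ y ^ p ^ m = algebraMap k _ x}) :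
    haveI : CharP (↥K) p := charP_of_injective_algebraMap (algebraMap k ↥K).injective p
    Module.rank (frobenius (↥K) p).fieldRange (↥K) ≤ (p : Cardinal) ^ (δ - 1) := by
  have : CharP K p := charP_of_injective_algebraMap (algebraMap k K).injective p
  set Ω := AlgebraicClosure k
  have : CharP Ω p := charP_of_injective_algebraMap (algebraMap k Ω).injective p
  set S := {y : Ω | ∃ m : ℕ, 1 ≤ m ∧ y ^ p ^ m = algebraMap k _ x}
  have hS : S ⊆ (· ^ p) '' S := by
    rintro y ⟨m, -, hy⟩
    obtain ⟨z, hz, rfl⟩ := exists_pow_pow_succ_eq p hy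
    exact ⟨z, ⟨m + 1, m.succ_pos, hz⟩, rfl⟩
  have hSK : S ⊆ K := hK ▸ (subset_adjoin k S).trans (SetLike.coe_subset_coe.2 le_sup_right)
  have : FiniteDimensional (frobenius k p).fieldRange k := Module.rank_lt_aleph0_iff.mp <|
    hk.trans_lt (by exact_mod_cast Cardinal.natCast_lt_aleph0 (n := p ^ δ))
  have hkx : Module.rank (frobenius k p).fieldRange⟮x⟯ k ≤ p ^ (δ - 1) :=
    rank_adjoin_simple_le_pow_pred (c := ⟨x ^ p, x, rfl⟩) rfl (fun ⟨c, hc⟩ => hx (hc ▸ c.2)) hk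
  have hxK : algebraMap k K x ∈ (frobenius K p).fieldRange := by
    obtain ⟨z, hz, -⟩ := exists_pow_pow_succ_eq p (a := algebraMap k Ω x) (m := 0) (pow_one _)
    exact ⟨⟨z, hSK ⟨1, le_rfl, hz⟩⟩, Subtype.ext (by simpa [frobenius_def] using hz)⟩
  have hKgen : K ≤ adjoin k ((· ^ p) '' K) := by
    have hsep : separableClosure k Ω ≤ K := hK ▸ le_sup_left
    conv_lhs => rw [hK]
    exact sup_le (separableClosure_le_adjoin_image_pow p hsep)
      (adjoin_le_iff.2 ((hS.trans (Set.image_mono hSK)).trans (subset_adjoin _ _)))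
  exact (rank_le_of_adjoin_eq_top _ (algebraMap_mem_frobenius_fieldRange_of_mem_adjoin p hxK)
    (adjoin_frobenius_fieldRange_eq_top p hKgen)).trans hkx

/-- Let `k` be a field of characteristic `p` with `[k : kᵖ] ≤ p^δ`, and let
`x ∈ k \ kᵖ`.  Let `K = ⋃_{m ≥ 1} kˢ(x^{1/p^m})` (inside a fixed algebraic closure), where
`kˢ` is the separable closure of `k`.  Then `[K : Kᵖ] ≤ p^{δ-1}`.  Degrees of the Frobenius
subfields are expressed via `Module.rank`. -/
theorem pDegree_of_union_separableClosure_adjoin_roots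
    (p : ℕ) [Fact p.Prime] (δ : ℕ) (hδ : 0 < δ)
    (k : Type*) [Field k] [CharP k p]
    (hk : Module.rank (frobenius k p).fieldRange k ≤ (p : Cardinal) ^ δ)
    (x : k) (hx : x ∉ (frobenius k p).fieldRange)
    (K : IntermediateField k (AlgebraicClosure k))
    (hK : K = separableClosure k (AlgebraicClosure k) ⊔
      IntermediateField.adjoin k
        {y : AlgebraicClosure k | ∃ m : ℕ, 1 ≤ m ∧ y ^ p ^ m = algebraMap k _ x}) :
    haveI : CharP (↥K) p := charP_of_injective_algebraMap (algebraMap k ↥K).injective p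
    Module.rank (frobenius (↥K) p).fieldRange (↥K) ≤ (p : Cardinal) ^ (δ - 1) :=
  pDegree_of_union_separableClosure_adjoin_roots_general p δ k hk x hx K hK
end

section
/- Let k be a field and l/k a finite extension obtained as l = l_s(x^{1/p^m}) where l_s/k is finite separable and x ∈ k. Then l/k has only finitely many intermediate fields, and hence l/k is a simple extension. -/
/-!
If `α` is separable over `k` and `y ^ p ^ m = x ∈ k`, then `α + y` is a primitive element of
`k⟮α, y⟯`: by Frobenius `(α + y) ^ p ^ m = α ^ p ^ m + x`, and `k⟮α ^ p ^ m⟯ = k⟮α⟯` because `α`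
is separable, so `α` and then `y` lie in `k⟮α + y⟯`. Taking for `α` a primitive element of `l_s`
makes `l` simple, and a simple algebraic extension has finitely many intermediate fields.
-/

open IntermediateField

namespace IntermediateField

variable {F E : Type*} [Field F] [Field E] [Algebra F E]

theorem adjoin_pair_eq_adjoin_add_of_isSeparable_of_pow_eq {α β : E} (hα : IsSeparable F α)
    (q : ℕ) [ExpChar F q] {n : ℕ} {b : F} (hβ : β ^ q ^ n = algebraMap F E b) :
    F⟮α, β⟯ = F⟮α + β⟯ := by
  have := expChar_of_injective_algebraMap (algebraMap F E).injective q
  have hα_mem : α ∈ F⟮α + β⟯ := by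
    have hpow : α ^ q ^ n = (α + β) ^ q ^ n - algebraMap F E b := by
      rw [add_pow_expChar_pow, hβ, add_sub_cancel_right]
    rw [← adjoin_simple_le_iff, adjoin_simple_eq_adjoin_pow_expChar_pow_of_isSeparable F E hα q n,
      adjoin_simple_le_iff, hpow]
    exact sub_mem (pow_mem (mem_adjoin_simple_self F _) _) (algebraMap_mem _ b)
  have hβ_mem : β ∈ F⟮α + β⟯ := by
    simpa using sub_mem (mem_adjoin_simple_self F (α + β)) hα_mem
  refine le_antisymm ?_ ?_
  · rw [adjoin_le_iff]
    rintro _ (rfl | rfl) <;> assumption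
  · rw [adjoin_simple_le_iff]
    exact add_mem (subset_adjoin F _ (Set.mem_insert α _))
      (subset_adjoin F _ (Set.mem_insert_of_mem α rfl))

theorem exists_isSeparable_eq_adjoin_simple (K : IntermediateField F E) [FiniteDimensional F K]
    [Algebra.IsSeparable F K] : ∃ α : E, IsSeparable F α ∧ K = F⟮α⟯ := by
  obtain ⟨a, ha⟩ := Field.exists_primitive_element F K
  refine ⟨a, (Algebra.IsSeparable.isSeparable F a).map K.val Subtype.val_injective, ?_⟩
  simpa only [lift_adjoin_simple, lift_top] using (congr_arg lift ha).symm

theorem exists_adjoin_simple_eq_top_of_eq_adjoin_simple {K : IntermediateField F E} {α : E}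
    (h : K = F⟮α⟯) : ∃ a : K, F⟮a⟯ = ⊤ := by
  subst h
  refine ⟨AdjoinSimple.gen F α, F⟮α⟯.lift_injective ?_⟩
  rw [lift_adjoin_simple, lift_top, AdjoinSimple.coe_gen]

end IntermediateField

/-- Let `k` be a field of characteristic `p > 0` and `l = l_s(x^{1/p^m})`
where `l_s/k` is a finite separable extension and `x ∈ k`.  Then `l/k` has only finitely
many intermediate fields, and hence `l/k` is a simple extension. -/
theorem finite_intermediateFields_and_simple
    (p : ℕ) [Fact p.Prime]
    (k : Type*) [Field k] [CharP k p]
    (ls : IntermediateField k (AlgebraicClosure k))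
    [FiniteDimensional k ls] (hsep : Algebra.IsSeparable k ls)
    (x : k) (m : ℕ) (y : AlgebraicClosure k) (hy : y ^ p ^ m = algebraMap k _ x)
    (l : IntermediateField k (AlgebraicClosure k)) (hl : l = ls ⊔ k⟮y⟯) :
    Finite (IntermediateField k ↥l) ∧
      ∃ a : ↥l, k⟮a⟯ = (⊤ : IntermediateField k ↥l) := by
  obtain ⟨α, hα_sep, hls⟩ := exists_isSeparable_eq_adjoin_simple ls
  have hl_simple : l = k⟮α + y⟯ := by
    rw [hl, hls, ← adjoin_pair_eq_adjoin_add_of_isSeparable_of_pow_eq hα_sep p hy,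
      ← adjoin_union, Set.singleton_union]
  have hprim := exists_adjoin_simple_eq_top_of_eq_adjoin_simple hl_simple
  exact ⟨Field.finite_intermediateField_of_exists_primitive_element k l hprim, hprim⟩
end
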